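/- arXiv:1907.02461 — 10 statements merged into one kernel-verified Lean document; each statement's English description precedes it below -/
import Mathlib

section
/- If S is a submonoid of ℕ^d whose complement in ℕ^d is finite, and v is a minimal generator of S (an element of S* not expressible as a sum of two elements of S*), then S \ {v} is again a submonoid of ℕ^d with finite complement in ℕ^d. -/
theorem stmt0 {d : ℕ} (S : Set (Fin d → ℕ))
    (h0 : (0 : Fin d → ℕ) ∈ S) (hadd : ∀ a ∈ S, ∀ b ∈ S, a + b ∈ S)
    (hfin : Sᶜ.Finite)
    (v : Fin d → ℕ) (hv : v ∈ S) (hv0 : v ≠ 0)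
    (hmin : ¬ ∃ a b : Fin d → ℕ, a ∈ S ∧ a ≠ 0 ∧ b ∈ S ∧ b ≠ 0 ∧ v = a + b) :
    (0 : Fin d → ℕ) ∈ S \ {v} ∧ (∀ a ∈ S \ {v}, ∀ b ∈ S \ {v}, a + b ∈ S \ {v}) ∧
      ((S \ {v})ᶜ).Finite := by
  refine ⟨⟨h0, fun h => hv0 (by simpa using h.symm)⟩, ?_, ?_⟩
  · rintro a ⟨ha, hav⟩ b ⟨hb, hbv⟩
    refine ⟨hadd a ha b hb, ?_⟩
    intro h
    simp only [Set.mem_singleton_iff] at h hav hbv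
    by_cases ha0 : a = 0
    · exact hbv (by simpa [ha0] using h)
    by_cases hb0 : b = 0
    · exact hav (by simpa [hb0] using h)
    exact hmin ⟨a, b, ha, ha0, hb, hb0, h.symm⟩
  · have : (S \ {v})ᶜ = Sᶜ ∪ {v} := by
      ext x; by_cases hx : x = v <;> simp [Set.mem_diff, hx] <;> tauto
    rw [this]
    exact hfin.union (Set.finite_singleton v)
end

section
/- Let S ⊆ ℕ^d be an affine semigroup (finitely generated submonoid) with minimal generating set A(S), and let v ∈ A(S). Then S \ {v} is a submonoid of ℕ^d generated by the set (A(S) \ {v}) ∪ {g + v : g ∈ A(S) \ {v}} ∪ {2v, 3v}. In particular S \ {v} is finitely generated. -/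
/-- The set of minimal generators (atoms) of a submonoid `S ⊆ ℕ^d`. -/
def atoms {d : ℕ} (S : Set (Fin d → ℕ)) : Set (Fin d → ℕ) :=
  {x ∈ S | x ≠ 0 ∧ ¬ ∃ a b : Fin d → ℕ, a ∈ S ∧ a ≠ 0 ∧ b ∈ S ∧ b ≠ 0 ∧ x = a + b}

/-!
Write `T = removalGenerators (atoms S) v`. Every element of `S` other than `0` and `v` lies in `⟨T⟩`,
and so does its sum with `v`: for an atom `g ≠ v` these are the generators `g` and `g + v`, and the
property passes to sums because a leftover `v` can be absorbed into a summand (`x + v`) or, when all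
summands are `v`, rewritten with `2v` and `3v`. Conversely `S \ {v}` is a submonoid because `v` is an
atom, and it contains `T` because `ℕ^d` is cancellative and torsion-free.
-/

section Closure

variable {M : Type*} [AddCommMonoid M]

def removalGenerators (A : Set M) (v : M) : Set M :=
  (A \ {v}) ∪ ((fun g => g + v) '' (A \ {v})) ∪ {2 • v, 3 • v}

theorem removalGenerators_finite {A : Set M} (hA : A.Finite) (v : M) :
    (removalGenerators A v).Finite :=
  ((hA.sdiff).union ((hA.sdiff).image _)).union (Set.toFinite _)

theorem eq_zero_or_eq_or_mem_closure_removalGenerators {A : Set M} {v x : M}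
    (hx : x ∈ AddSubmonoid.closure A) :
    x = 0 ∨ x = v ∨ (x ∈ AddSubmonoid.closure (removalGenerators A v) ∧
      x + v ∈ AddSubmonoid.closure (removalGenerators A v)) := by
  set C := AddSubmonoid.closure (removalGenerators A v)
  have hv2 : v + v ∈ C := two_nsmul v ▸ AddSubmonoid.subset_closure (by simp [removalGenerators])
  have hv3 : v + v + v ∈ C := by
    have : 3 • v ∈ C := AddSubmonoid.subset_closure (by simp [removalGenerators])
    rwa [succ_nsmul, two_nsmul] at this
  induction hx using AddSubmonoid.closure_induction with
  | mem g hg =>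
    by_cases hgv : g = v
    · exact .inr (.inl hgv)
    · exact .inr (.inr ⟨AddSubmonoid.subset_closure (.inl (.inl ⟨hg, hgv⟩)),
        AddSubmonoid.subset_closure (.inl (.inr ⟨g, ⟨hg, hgv⟩, rfl⟩))⟩)
  | zero => exact .inl rfl
  | add a b _ _ iha ihb =>
    rcases iha with rfl | ha | ⟨ha, hav⟩
    · simpa using ihb
    all_goals rcases ihb with rfl | hb | ⟨hb, hbv⟩
    · simp [ha]
    · rw [ha, hb]
      exact .inr (.inr ⟨hv2, hv3⟩)
    · rw [ha, add_comm v b, add_assoc]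
      exact .inr (.inr ⟨hbv, C.add_mem hb hv2⟩)
    · simpa using Or.inr (Or.inr ⟨ha, hav⟩)
    · rw [hb, add_assoc]
      exact .inr (.inr ⟨hav, C.add_mem ha hv2⟩)
    · exact .inr (.inr ⟨C.add_mem ha hb, add_assoc a b v ▸ C.add_mem ha hbv⟩)

theorem mem_closure_removalGenerators {A : Set M} {v x : M}
    (hx : x ∈ AddSubmonoid.closure A) (hxv : x ≠ v) :
    x ∈ AddSubmonoid.closure (removalGenerators A v) := by
  rcases eq_zero_or_eq_or_mem_closure_removalGenerators hx with rfl | hx | ⟨h, -⟩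
  · exact zero_mem _
  · exact absurd hx hxv
  · exact h

end Closure

section Atoms

variable {d : ℕ} {S : Set (Fin d → ℕ)} {v : Fin d → ℕ}

theorem nsmul_ne_self_of_ne_zero (hv : v ≠ 0) {n : ℕ} (hn : n ≠ 1) : n • v ≠ v := by
  obtain ⟨i, hi⟩ := Function.ne_iff.mp hv
  intro h
  have : n * v i = 1 * v i := by simpa using congrFun h i
  exact hn (Nat.eq_of_mul_eq_mul_right (Nat.pos_of_ne_zero hi) this)

theorem eq_zero_or_eq_zero_of_add_eq_atom (hv : v ∈ atoms S) {a b : Fin d → ℕ}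
    (ha : a ∈ S) (hb : b ∈ S) (hab : a + b = v) : a = 0 ∨ b = 0 := by
  by_contra! h
  exact hv.2.2 ⟨a, b, ha, h.1, hb, h.2, hab.symm⟩

theorem add_mem_sdiff_atom (hadd : ∀ a ∈ S, ∀ b ∈ S, a + b ∈ S) (hv : v ∈ atoms S)
    {a b : Fin d → ℕ} (ha : a ∈ S \ {v}) (hb : b ∈ S \ {v}) : a + b ∈ S \ {v} := by
  refine ⟨hadd a ha.1 b hb.1, fun hab => ?_⟩
  rcases eq_zero_or_eq_zero_of_add_eq_atom hv ha.1 hb.1 hab with rfl | rfl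
  · exact hb.2 (by simpa using hab)
  · exact ha.2 (by simpa using hab)

theorem zero_mem_sdiff_atom (h0 : (0 : Fin d → ℕ) ∈ S) (hv : v ∈ atoms S) :
    (0 : Fin d → ℕ) ∈ S \ {v} :=
  ⟨h0, fun h => hv.2.1 (Set.mem_singleton_iff.mp h).symm⟩

theorem removalGenerators_atoms_subset (hadd : ∀ a ∈ S, ∀ b ∈ S, a + b ∈ S)
    (hv : v ∈ atoms S) : removalGenerators (atoms S) v ⊆ S \ {v} := by
  have hvS := hv.1
  have hv0 := hv.2.1
  rintro x ((⟨hx, hxv⟩ | ⟨g, ⟨hg, -⟩, rfl⟩) | rfl | rfl)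
  · exact ⟨hx.1, hxv⟩
  · exact ⟨hadd g hg.1 v hvS, fun h => hg.2.1 (add_eq_right.mp h)⟩
  · exact ⟨two_nsmul v ▸ hadd v hvS v hvS, nsmul_ne_self_of_ne_zero hv0 (by norm_num)⟩
  · refine ⟨?_, nsmul_ne_self_of_ne_zero hv0 (by norm_num)⟩
    rw [succ_nsmul, two_nsmul]
    exact hadd _ (hadd v hvS v hvS) v hvS

theorem closure_removalGenerators_atoms_subset (h0 : (0 : Fin d → ℕ) ∈ S)
    (hadd : ∀ a ∈ S, ∀ b ∈ S, a + b ∈ S) (hv : v ∈ atoms S) :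
    (AddSubmonoid.closure (removalGenerators (atoms S) v) : Set (Fin d → ℕ)) ⊆ S \ {v} := by
  intro x hx
  induction hx using AddSubmonoid.closure_induction with
  | mem x hx => exact removalGenerators_atoms_subset hadd hv hx
  | zero => exact zero_mem_sdiff_atom h0 hv
  | add a b _ _ ha hb => exact add_mem_sdiff_atom hadd hv ha hb

end Atoms

theorem stmt1 {d : ℕ} (S : Set (Fin d → ℕ))
    (h0 : (0 : Fin d → ℕ) ∈ S) (hadd : ∀ a ∈ S, ∀ b ∈ S, a + b ∈ S)
    (hfg : (atoms S).Finite)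
    (hgen : (AddSubmonoid.closure (atoms S) : Set (Fin d → ℕ)) = S)
    (v : Fin d → ℕ) (hv : v ∈ atoms S) :
    (0 : Fin d → ℕ) ∈ S \ {v} ∧ (∀ a ∈ S \ {v}, ∀ b ∈ S \ {v}, a + b ∈ S \ {v}) ∧
    (AddSubmonoid.closure
        ((atoms S \ {v}) ∪ ((fun g => g + v) '' (atoms S \ {v})) ∪ {2 • v, 3 • v}) :
      Set (Fin d → ℕ)) = S \ {v} ∧
    ((atoms S \ {v}) ∪ ((fun g => g + v) '' (atoms S \ {v})) ∪ {2 • v, 3 • v}).Finite := by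
  refine ⟨zero_mem_sdiff_atom h0 hv, fun a ha b hb => add_mem_sdiff_atom hadd hv ha hb,
    ?_, removalGenerators_finite hfg v⟩
  refine (closure_removalGenerators_atoms_subset h0 hadd hv).antisymm ?_
  rintro x ⟨hx, hxv⟩
  rw [← hgen] at hx
  exact mem_closure_removalGenerators hx hxv
end

section
/- Let ⪯ be a relaxed monomial order on ℕ^d and let S be a submonoid of ℕ^d with S ≠ {0}, with multiplicity m = m_⪯(S) (the ⪯-least nonzero element of S). Then S \ {m} is a submonoid of ℕ^d. -/
/-- A relaxed monomial order on `ℕ^d`, given by its `≤`-relation `r`. -/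
def RelaxedMonomialOrder {d : ℕ} (r : (Fin d → ℕ) → (Fin d → ℕ) → Prop) : Prop :=
  (∀ v w, r v w ∨ r w v) ∧ (∀ v w, r v w → r w v → v = w) ∧
  (∀ u v w, r u v → r v w → r u w) ∧
  (∀ v w u : Fin d → ℕ, r v w → r v (w + u)) ∧
  (∀ v : Fin d → ℕ, v ≠ 0 → r 0 v)

theorem stmt4 {d : ℕ} (r : (Fin d → ℕ) → (Fin d → ℕ) → Prop)
    (hr : RelaxedMonomialOrder r) (S : Set (Fin d → ℕ))
    (h0 : (0 : Fin d → ℕ) ∈ S) (hadd : ∀ a ∈ S, ∀ b ∈ S, a + b ∈ S)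
    (hS : S ≠ {0}) (m : Fin d → ℕ)
    (hm : m ∈ S) (hm0 : m ≠ 0) (hmin : ∀ x ∈ S, x ≠ 0 → r m x) :
    (0 : Fin d → ℕ) ∈ S \ {m} ∧ ∀ a ∈ S \ {m}, ∀ b ∈ S \ {m}, a + b ∈ S \ {m} := by
  obtain ⟨htot, hanti, _, hcompat, _⟩ := hr
  have hrefl : ∀ v, r v v := fun v => (htot v v).elim id id
  refine ⟨⟨h0, fun h => hm0 (Set.mem_singleton_iff.mp h).symm⟩, ?_⟩
  rintro a ⟨ha, ham⟩ b ⟨hb, hbm⟩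
  refine ⟨hadd a ha b hb, fun h => ?_⟩
  have hab : a + b = m := Set.mem_singleton_iff.mp h
  have ha0 : a ≠ 0 := by
    rintro rfl
    exact hbm (by simpa using hab)
  have h1 : r m a := hmin a ha ha0
  have h2 : r a m := hab ▸ hcompat a a b (hrefl a)
  exact ham (Set.mem_singleton_iff.mpr (hanti a m h2 h1))
end

section
/- Let S ⊆ ℕ^d be a generalized numerical semigroup with S ≠ ℕ^d, and let ⪯ be a relaxed monomial order on ℕ^d. Let F = F_⪯(S) be the ⪯-greatest element of ℕ^d \ S. Then S ∪ {F} is a generalized numerical semigroup. -/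
theorem stmt5 {d : ℕ} (r : (Fin d → ℕ) → (Fin d → ℕ) → Prop)
    (hr : RelaxedMonomialOrder r) (S : Set (Fin d → ℕ))
    (h0 : (0 : Fin d → ℕ) ∈ S) (hadd : ∀ a ∈ S, ∀ b ∈ S, a + b ∈ S)
    (hfin : Sᶜ.Finite) (hne : S ≠ Set.univ)
    (F : Fin d → ℕ) (hF : F ∉ S) (hFmax : ∀ x, x ∉ S → r x F) :
    (0 : Fin d → ℕ) ∈ S ∪ {F} ∧ (∀ a ∈ S ∪ {F}, ∀ b ∈ S ∪ {F}, a + b ∈ S ∪ {F}) ∧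
      ((S ∪ {F})ᶜ).Finite := by
  obtain ⟨htot, hanti, htrans, hmono, hzero⟩ := hr
  have hrefl : ∀ v, r v v := fun v => (htot v v).elim id id
  -- key: a + F ∈ S ∪ {F} for any a
  have key : ∀ a : Fin d → ℕ, a + F ∈ S ∪ {F} := by
    intro a
    by_cases h : a + F ∈ S
    · exact Or.inl h
    · right
      have h1 : r (a + F) F := hFmax _ h
      have h2 : r F (a + F) := by
        have := hmono F F a (hrefl F)
        rwa [add_comm] at this
      exact hanti _ _ h1 h2
  refine ⟨Or.inl h0, ?_, hfin.subset (fun x hx h => hx (Or.inl h))⟩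
  rintro a (ha | ha) b (hb | hb)
  · exact Or.inl (hadd a ha b hb)
  · simp only [Set.mem_singleton_iff] at hb; rw [hb]; exact key a
  · simp only [Set.mem_singleton_iff] at ha; rw [ha, add_comm]; exact key b
  · simp only [Set.mem_singleton_iff] at ha hb; rw [ha, hb]
    have := key F
    rcases this with h | h
    · exact Or.inl h
    · simp only [Set.mem_singleton_iff] at h
      have hF0 : F = 0 := by
        funext i
        have := congrFun h i
        simp only [Pi.add_apply, Pi.zero_apply] at this ⊢
        omega
      exact absurd (hF0 ▸ h0) hF
end

section
/- Let ⪯ be a relaxed monomial order on ℕ^d and s ∈ ℕ^d such that the set {t ∈ ℕ^d : t ⪯ s} is finite. Then S = {x ∈ ℕ^d : s ≺ x} ∪ {0} is a generalized numerical semigroup, i.e., a submonoid of ℕ^d with finite complement. -/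
theorem stmt8 {d : ℕ} (r : (Fin d → ℕ) → (Fin d → ℕ) → Prop)
    (hr : RelaxedMonomialOrder r) (s : Fin d → ℕ)
    (hfin : {t : Fin d → ℕ | r t s}.Finite) :
    (0 : Fin d → ℕ) ∈ ({x : Fin d → ℕ | r s x ∧ s ≠ x} ∪ {0}) ∧
    (∀ a ∈ ({x : Fin d → ℕ | r s x ∧ s ≠ x} ∪ {0}),
      ∀ b ∈ ({x : Fin d → ℕ | r s x ∧ s ≠ x} ∪ {0}),
        a + b ∈ ({x : Fin d → ℕ | r s x ∧ s ≠ x} ∪ {0})) ∧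
    (({x : Fin d → ℕ | r s x ∧ s ≠ x} ∪ {0})ᶜ).Finite := by
  obtain ⟨htot, hanti, htrans, hadd, hzero⟩ := hr
  have hrefl : ∀ v, r v v := fun v => (htot v v).elim id id
  refine ⟨Or.inr rfl, ?_, ?_⟩
  · rintro a (⟨hsa, hne⟩ | ha) b (⟨hsb, hneb⟩ | hb)
    · left
      refine ⟨hadd s a b hsa, fun h => ?_⟩
      have : r a s := h ▸ hadd a a b (hrefl a)
      exact hne (hanti s a hsa this)
    · simp only [Set.mem_singleton_iff] at hb
      subst hb; rw [add_zero]; exact Or.inl ⟨hsa, hne⟩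
    · simp only [Set.mem_singleton_iff] at ha
      subst ha; rw [zero_add]; exact Or.inl ⟨hsb, hneb⟩
    · simp only [Set.mem_singleton_iff] at ha hb
      subst ha; subst hb; simp
  · apply hfin.subset
    intro x hx
    simp only [Set.mem_compl_iff, Set.mem_union, Set.mem_setOf_eq,
      Set.mem_singleton_iff, not_or, not_and_or, not_ne_iff] at hx
    obtain ⟨h1 | h1, _⟩ := hx
    · exact (htot x s).resolve_right (fun h => h1 h)
    · exact h1 ▸ hrefl x
end

section
/- Let ⪯ be a relaxed monomial order on ℕ^d and let S ⊊ ℕ^d be a generalized numerical semigroup that is not ordinary with respect to ⪯. Set T = (S ∪ {F_⪯(S)}) \ {m_⪯(S)}. Then m_⪯(S) is a special gap of T, i.e., 2·m_⪯(S) ∈ T and m_⪯(S) + t ∈ T for every nonzero t ∈ T. -/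
theorem stmt11 {d : ℕ} (r : (Fin d → ℕ) → (Fin d → ℕ) → Prop)
    (hr : RelaxedMonomialOrder r) (S : Set (Fin d → ℕ))
    (h0 : (0 : Fin d → ℕ) ∈ S) (hadd : ∀ a ∈ S, ∀ b ∈ S, a + b ∈ S)
    (hfin : Sᶜ.Finite) (hne : S ≠ Set.univ)
    (hnotord : ∃ a ∈ S, ∃ h ∉ S, r a h ∧ a ≠ h)
    (F : Fin d → ℕ) (hF : F ∉ S) (hFmax : ∀ x, x ∉ S → r x F)
    (m : Fin d → ℕ) (hm : m ∈ S) (hm0 : m ≠ 0) (hmin : ∀ x ∈ S, x ≠ 0 → r m x)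
    (T : Set (Fin d → ℕ)) (hT : T = (S ∪ {F}) \ {m}) :
    m ∉ T ∧ 2 • m ∈ T ∧ ∀ t ∈ T, t ≠ 0 → m + t ∈ T := by
  obtain ⟨htot, hanti, htrans, hmono, hzero⟩ := hr
  subst hT
  refine ⟨?_, ?_, ?_⟩
  · intro h
    exact h.2 rfl
  · have h2 : (2 : ℕ) • m = m + m := two_smul ℕ m
    rw [h2]
    refine ⟨Or.inl (hadd m hm m hm), ?_⟩
    intro h
    simp only [Set.mem_singleton_iff] at h
    exact hm0 (add_eq_left.mp h)
  · rintro t ⟨ht, htm⟩ ht0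
    have hmt0 : m + t ≠ m := by
      intro h
      exact ht0 (add_eq_left.mp h)
    rcases ht with ht | ht
    · exact ⟨Or.inl (hadd m hm t ht), hmt0⟩
    · simp only [Set.mem_singleton_iff] at ht
      subst ht
      -- show m + F ∈ S
      have hmF : m + t ∈ S := by
        by_contra hmF
        have h1 : r (m + t) t := hFmax _ hmF
        have h2 : r t (t + m) := hmono t t m (by rcases htot t t with h | h <;> exact h)
        rw [add_comm t m] at h2
        have := hanti _ _ h2 h1
        exact hm0 (by
          have : t + m = t := by rw [add_comm]; exact this.symm
          exact add_eq_left.mp this)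
      exact ⟨Or.inl hmF, hmt0⟩
end

section
/- Let S ⊆ ℕ^d be a generalized numerical semigroup with gap set H(S) = ℕ^d \ S, and let ⪯ be a relaxed monomial order. Write the gaps in increasing ⪯-order as h₁ ≺ h₂ ≺ ⋯ ≺ h_g. Then for every i ∈ {1, …, g}, the set ℕ^d \ {h₁, …, h_{i−1}} is a submonoid of ℕ^d (hence a generalized numerical semigroup), and h_i is a minimal generator of it. -/
theorem stmt12 {d g : ℕ} (r : (Fin d → ℕ) → (Fin d → ℕ) → Prop)
    (hr : RelaxedMonomialOrder r) (S : Set (Fin d → ℕ))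
    (h0 : (0 : Fin d → ℕ) ∈ S) (hadd : ∀ a ∈ S, ∀ b ∈ S, a + b ∈ S)
    (h : Fin g → (Fin d → ℕ)) (hH : Sᶜ = Set.range h)
    (hord : ∀ i j : Fin g, i < j → r (h i) (h j) ∧ h i ≠ h j) :
    ∀ i : Fin g,
      ((0 : Fin d → ℕ) ∈ (h '' {j : Fin g | j < i})ᶜ ∧
        ∀ a ∈ (h '' {j : Fin g | j < i})ᶜ, ∀ b ∈ (h '' {j : Fin g | j < i})ᶜ,
          a + b ∈ (h '' {j : Fin g | j < i})ᶜ) ∧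
      h i ∈ (h '' {j : Fin g | j < i})ᶜ ∧ h i ≠ 0 ∧
      ¬ ∃ a b : Fin d → ℕ, a ∈ (h '' {j : Fin g | j < i})ᶜ ∧ a ≠ 0 ∧
          b ∈ (h '' {j : Fin g | j < i})ᶜ ∧ b ≠ 0 ∧ h i = a + b := by
  obtain ⟨htot, hanti, htrans, hmono, hzero⟩ := hr
  have hrefl : ∀ v, r v v := fun v => (htot v v).elim id id
  have hhS : ∀ k, h k ∉ S := by
    intro k hk
    have : h k ∈ Sᶜ := hH ▸ Set.mem_range_self k
    exact this hk
  have key : ∀ (i : Fin g) (a : Fin d → ℕ), a ∈ (h '' {j : Fin g | j < i})ᶜ → a ∉ S →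
      ∃ k : Fin g, h k = a ∧ i ≤ k := by
    intro i a ha haS
    have : a ∈ Sᶜ := haS
    rw [hH] at this
    obtain ⟨k, hk⟩ := this
    refine ⟨k, hk, ?_⟩
    by_contra hlt
    exact ha ⟨k, lt_of_not_ge hlt, hk⟩
  have step : ∀ (i j : Fin g) (a b : Fin d → ℕ), a ∈ (h '' {j : Fin g | j < i})ᶜ →
      a ∉ S → h j = a + b → i ≤ j ∧ (j ≤ i → b = 0) := by
    intro i j a b ha haS hj
    obtain ⟨k, hk, hik⟩ := key i a ha haS
    have hr1 : r (h k) (h j) := by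
      rw [hj, ← hk]
      exact hmono _ _ b (hrefl (h k))
    have hkj : k ≤ j := by
      by_contra hlt
      obtain ⟨hr2, hne⟩ := hord j k (lt_of_not_ge hlt)
      exact hne (hanti _ _ hr2 hr1)
    refine ⟨le_trans hik hkj, fun hji => ?_⟩
    have hjk : j = k := le_antisymm (le_trans hji hik) hkj
    have ha' : h j = a := by rw [hjk, hk]
    have : a = a + b := ha'.symm.trans hj
    exact left_eq_add.mp this
  intro i
  refine ⟨⟨?_, ?_⟩, ?_, ?_, ?_⟩
  · rintro ⟨j, _, hj⟩
    exact hhS j (hj ▸ h0)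
  · intro a ha b hb
    rintro ⟨j, hji, hj⟩
    by_cases haS : a ∈ S
    · by_cases hbS : b ∈ S
      · exact hhS j (hj ▸ hadd a haS b hbS)
      · have := (step i j b a hb hbS (hj.trans (add_comm a b))).1
        exact absurd hji (not_lt_of_ge this)
    · have := (step i j a b ha haS hj).1
      exact absurd hji (not_lt_of_ge this)
  · rintro ⟨j, hji, hj⟩
    exact (hord j i hji).2 hj
  · intro hi0
    exact hhS i (hi0 ▸ h0)
  · rintro ⟨a, b, ha, ha0, hb, hb0, heq⟩
    by_cases haS : a ∈ S
    · by_cases hbS : b ∈ S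
      · exact hhS i (heq ▸ hadd a haS b hbS)
      · exact ha0 ((step i i b a hb hbS (heq.trans (add_comm a b))).2 le_rfl)
    · exact hb0 ((step i i a b ha haS heq).2 le_rfl)
end

section
/- Let d ≥ 2 and let S = ⟨A⟩ be the submonoid of ℕ^d generated by a set A ⊆ ℕ^d. Then S has finite complement in ℕ^d if and only if: (1) for every j ∈ {1,…,d} there exist finitely many positive integers a₁,…,a_r with gcd(a₁,…,a_r) = 1 and a₁e_j, …, a_r e_j ∈ A; and (2) for every pair i ≠ k there exists n ∈ ℕ with e_i + n·e_k ∈ A. -/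
/-! Coordinate faces `{x | x l = 0 for l ∉ I}` of `ℕ^d` are closed under taking summands, so a
decomposition of an element of such a face into generators uses only generators lying in that
face. Cofiniteness puts `n • e j` and `(n + 1) • e j` into `S`, so the generators on the `j`-th
axis have gcd `1`; it also puts some `e i + N • e k` into `S`, and since its `i`-th coordinate is
`1`, one generator must be of the form `e i + m • e k`.

Conversely, the gcd condition gives `F j` with `n • e j ∈ S` for `n ≥ F j`. Then
`N • e k + c • e i ∈ S` for every `c` as soon as `N ≥ F k + F i * m`: either `c ≥ F i`, or the
element is `c • (e i + m • e k) + (N - c * m) • e k`. Summing over `i` gives `N • e k + ℕ^d ⊆ S` for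
some `N`, which confines the complement of `S` to a box. -/

open Filter

theorem eventually_mem_of_finite_compl {M : Type*} {S : Set M} (hS : Sᶜ.Finite) {f : ℕ → M}
    (hf : Function.Injective f) : ∀ᶠ n in atTop, f n ∈ S := by
  rw [← Nat.cofinite_eq_atTop]
  exact hf.tendsto_cofinite.eventually (eventually_cofinite.mpr hS)

theorem AddSubmonoid.mem_closure_inter_of_mem_closure {M : Type*} [AddMonoid M] {A F : Set M}
    (hF : ∀ y z, y + z ∈ F → y ∈ F ∧ z ∈ F) {x : M} (hx : x ∈ closure A) (hxF : x ∈ F) :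
    x ∈ closure (A ∩ F) := by
  induction hx using AddSubmonoid.closure_induction with
  | mem y hy => exact subset_closure ⟨hy, hxF⟩
  | zero => exact zero_mem _
  | add y z _ _ hy hz =>
    obtain ⟨hyF, hzF⟩ := hF y z hxF
    exact add_mem (hy hyF) (hz hzF)

theorem mem_closure_inter_setOf_forall_eq_zero {ι : Type*} {A : Set (ι → ℕ)} (p : ι → Prop)
    {x : ι → ℕ} (hx : x ∈ AddSubmonoid.closure A) (hxp : ∀ l, p l → x l = 0) :
    x ∈ AddSubmonoid.closure (A ∩ {y | ∀ l, p l → y l = 0}) := by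
  refine AddSubmonoid.mem_closure_inter_of_mem_closure (fun y z h => ?_) hx hxp
  simp only [Set.mem_ofPred_eq, Pi.add_apply, add_eq_zero] at h ⊢
  exact ⟨fun l hl => (h l hl).1, fun l hl => (h l hl).2⟩

theorem Nat.exists_fin_gcd_eq_one_of_setGcd_eq_one {s : Set ℕ} (hs : setGcd s = 1) :
    ∃ (r : ℕ) (a : Fin r → ℕ), 0 < r ∧ Finset.univ.gcd a = 1 ∧ ∀ t, a t ∈ s := by
  obtain ⟨t, n, hts, hn⟩ := exists_mem_span_nat_finset_of_ge s
  have hspan : Ideal.span (t : Set ℕ) ≤ Ideal.span {t.gcd id} :=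
    Ideal.span_le.mpr fun x hx => Ideal.mem_span_singleton.mpr (Finset.gcd_dvd hx)
  have hdvd : ∀ m ≥ n, t.gcd id ∣ m := fun m hm =>
    Ideal.mem_span_singleton.mp (hspan (hn m hm (hs ▸ one_dvd m)))
  have hgcd : t.gcd id = 1 :=
    Nat.dvd_one.mp ((Nat.dvd_add_right (hdvd n le_rfl)).mp (hdvd (n + 1) n.le_succ))
  refine ⟨t.card, t.orderEmbOfFin rfl, Finset.card_pos.mpr ?_, ?_,
    fun i => hts (t.orderEmbOfFin_mem rfl i)⟩
  · rw [Finset.nonempty_iff_ne_empty]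
    rintro rfl
    simp at hgcd
  · have := Finset.gcd_image (f := id) (g := t.orderEmbOfFin rfl) Finset.univ
    rw [t.image_orderEmbOfFin_univ rfl, hgcd] at this
    exact this.symm

theorem Nat.setGcd_range_dvd_gcd {ι : Type*} [Fintype ι] (a : ι → ℕ) :
    setGcd (Set.range a) ∣ Finset.univ.gcd a :=
  Finset.dvd_gcd fun t _ => setGcd_dvd_of_mem ⟨t, rfl⟩

theorem AddSubmonoid.exists_forall_ge_nsmul_mem {M : Type*} [AddMonoid M] (S : AddSubmonoid M)
    (v : M) {s : Set ℕ} (hs : Nat.setGcd s = 1) (hsv : ∀ a ∈ s, (a : ℕ) • v ∈ S) :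
    ∃ F : ℕ, ∀ n ≥ F, n • v ∈ S := by
  obtain ⟨F, hF⟩ := Nat.exists_mem_closure_of_ge s
  have hle : closure s ≤ S.comap (multiplesHom M v) := closure_le.mpr hsv
  exact ⟨F, fun n hn => hle (hF n hn (hs ▸ one_dvd n))⟩

theorem AddSubmonoid.nsmul_add_nsmul_mem {M : Type*} [AddCommMonoid M] {S : AddSubmonoid M}
    {u v : M} {F G m : ℕ} (hu : ∀ n ≥ F, n • u ∈ S) (hv : ∀ n ≥ G, n • v ∈ S)
    (huv : u + m • v ∈ S) (c : ℕ) : (G + F * m) • v + c • u ∈ S := by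
  rcases le_or_gt F c with hc | hc
  · exact add_mem (hv _ (Nat.le_add_right G _)) (hu c hc)
  · obtain ⟨e, rfl⟩ := exists_add_of_le hc.le
    have : (G + (c + e) * m) • v + c • u = (G + e * m) • v + c • (u + m • v) := by
      simp only [add_smul, add_mul, mul_smul, smul_add]
      abel
    rw [this]
    exact add_mem (hv _ (Nat.le_add_right G _)) (nsmul_mem huv c)

theorem exists_forall_nsmul_single_add_mem {ι : Type*} [Fintype ι] [DecidableEq ι]
    {S : AddSubmonoid (ι → ℕ)} (hax : ∀ j, ∃ F : ℕ, ∀ n ≥ F, n • Pi.single j (1 : ℕ) ∈ S)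
    (k : ι)
    (hmix : ∀ i, i ≠ k → ∃ m : ℕ, Pi.single i (1 : ℕ) + m • Pi.single k (1 : ℕ) ∈ S) :
    ∃ N : ℕ, ∀ y : ι → ℕ, N • Pi.single k (1 : ℕ) + y ∈ S := by
  choose F hF using hax
  have hcoord :
      ∀ i, ∃ N : ℕ, ∀ c : ℕ, N • Pi.single k (1 : ℕ) + c • Pi.single i (1 : ℕ) ∈ S := by
    intro i
    rcases eq_or_ne i k with rfl | hik
    · exact ⟨F i, fun c => by rw [← add_smul]; exact hF i _ (Nat.le_add_right _ _)⟩
    · obtain ⟨m, hm⟩ := hmix i hik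
      exact ⟨_, AddSubmonoid.nsmul_add_nsmul_mem (hF i) (hF k) hm⟩
  choose N hN using hcoord
  refine ⟨∑ i, N i, fun y => ?_⟩
  have hy : y = ∑ i, y i • Pi.single i (1 : ℕ) := by
    conv_lhs => rw [← Finset.univ_sum_single y]
    simp only [← Pi.single_smul', smul_eq_mul, mul_one]
  rw [hy, Finset.sum_smul, ← Finset.sum_add_distrib]
  exact sum_mem fun i _ => hN i (y i)

theorem finite_compl_of_forall_exists_nsmul_single_add_mem {ι : Type*} [Finite ι]
    [DecidableEq ι] {S : AddSubmonoid (ι → ℕ)}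
    (h : ∀ k, ∃ N : ℕ, ∀ y : ι → ℕ, N • Pi.single k (1 : ℕ) + y ∈ S) :
    ((S : Set (ι → ℕ))ᶜ).Finite := by
  choose N hN using h
  refine (Set.Finite.pi fun k => Set.finite_Iio (N k)).subset fun x hx => ?_
  simp only [Set.mem_pi, Set.mem_univ, Set.mem_Iio, true_implies]
  intro k
  by_contra! hk
  have hle : N k • Pi.single k (1 : ℕ) ≤ x := by
    intro l
    rcases eq_or_ne l k with rfl | hlk
    · simpa using hk
    · simp [hlk]
  exact hx (add_tsub_cancel_of_le hle ▸ hN k (x - N k • Pi.single k (1 : ℕ)))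

theorem exists_fin_gcd_eq_one_nsmul_single_mem {ι : Type*} [DecidableEq ι] {A : Set (ι → ℕ)}
    (hfin : ((AddSubmonoid.closure A : Set (ι → ℕ))ᶜ).Finite) (j : ι) :
    ∃ (r : ℕ) (a : Fin r → ℕ), 0 < r ∧ (∀ t, 0 < a t) ∧
      Finset.univ.gcd a = 1 ∧ ∀ t, a t • Pi.single j (1 : ℕ) ∈ A := by
  set B := {a : ℕ | 0 < a ∧ a • Pi.single j (1 : ℕ) ∈ A}
  have hB : ∀ n : ℕ, n • Pi.single j (1 : ℕ) ∈ AddSubmonoid.closure A →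
      n ∈ AddSubmonoid.closure B := by
    intro n hn
    have hface := mem_closure_inter_setOf_forall_eq_zero (· ≠ j) hn fun l hl => by simp [hl]
    suffices hle : AddSubmonoid.closure (A ∩ {y | ∀ l, l ≠ j → y l = 0}) ≤
        (AddSubmonoid.closure B).comap (Pi.evalAddMonoidHom (fun _ => ℕ) j) by
      simpa using hle hface
    refine AddSubmonoid.closure_le.mpr fun y ⟨hyA, hyF⟩ => ?_
    have hy : y = y j • Pi.single j (1 : ℕ) := funext fun l => by
      rcases eq_or_ne l j with rfl | hl
      · simp
      · simp [hyF l hl, hl]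
    rcases (y j).eq_zero_or_pos with h0 | hpos
    · simp [h0]
    · exact AddSubmonoid.subset_closure ⟨hpos, hy ▸ hyA⟩
  have hinj : Function.Injective fun n : ℕ => (n • Pi.single j 1 : ι → ℕ) :=
    fun m n h => by simpa using congrFun h j
  have hev := eventually_mem_of_finite_compl hfin hinj
  obtain ⟨n, hn, hn1⟩ := (hev.and ((tendsto_add_atTop_nat 1).eventually hev)).exists
  have hgcd : Nat.setGcd B = 1 := Nat.dvd_one.mp <|
    (Nat.dvd_add_right (Nat.setGcd_dvd_of_mem_closure (hB n hn))).mp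
      (Nat.setGcd_dvd_of_mem_closure (hB _ hn1))
  obtain ⟨r, a, hr, ha, haB⟩ := Nat.exists_fin_gcd_eq_one_of_setGcd_eq_one hgcd
  exact ⟨r, a, hr, fun t => (haB t).1, ha, fun t => (haB t).2⟩

theorem exists_single_add_nsmul_single_mem {ι : Type*} [DecidableEq ι] {A : Set (ι → ℕ)}
    (hfin : ((AddSubmonoid.closure A : Set (ι → ℕ))ᶜ).Finite) {i k : ι} (hik : i ≠ k) :
    ∃ n : ℕ, Pi.single i (1 : ℕ) + n • Pi.single k (1 : ℕ) ∈ A := by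
  have hinj : Function.Injective fun n : ℕ => (Pi.single i 1 + n • Pi.single k 1 : ι → ℕ) :=
    fun m n h => by simpa [hik] using congrFun h k
  obtain ⟨N, hN⟩ := (eventually_mem_of_finite_compl hfin hinj).exists
  have hface := mem_closure_inter_setOf_forall_eq_zero (fun l => l ≠ i ∧ l ≠ k) hN
    fun l hl => by simp [hl.1, hl.2]
  have h1 : 1 ∈ AddSubmonoid.closure
      (Pi.evalAddMonoidHom (fun _ => ℕ) i '' (A ∩ {y | ∀ l, l ≠ i ∧ l ≠ k → y l = 0})) := by
    rw [← AddMonoidHom.map_mclosure]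
    exact ⟨_, hface, by simp [hik]⟩
  obtain ⟨y, ⟨hyA, hyF⟩, hyi⟩ := Nat.one_mem_closure_iff.mp h1
  refine ⟨y k, ?_⟩
  convert hyA using 1
  funext l
  rcases eq_or_ne l i with rfl | hli
  · simpa [hik] using hyi.symm
  rcases eq_or_ne l k with rfl | hlk
  · simp [hli]
  · simp [hli, hlk, hyF l ⟨hli, hlk⟩]

theorem stmt15_general {d : ℕ} (A : Set (Fin d → ℕ)) :
    ((AddSubmonoid.closure A : Set (Fin d → ℕ))ᶜ).Finite ↔
      (∀ j : Fin d, ∃ (r : ℕ) (a : Fin r → ℕ), 0 < r ∧ (∀ t, 0 < a t) ∧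
          Finset.univ.gcd a = 1 ∧ ∀ t, (a t) • Pi.single j (1 : ℕ) ∈ A) ∧
      (∀ i k : Fin d, i ≠ k →
        ∃ n : ℕ, Pi.single i (1 : ℕ) + n • Pi.single k (1 : ℕ) ∈ A) := by
  refine ⟨fun hfin => ⟨exists_fin_gcd_eq_one_nsmul_single_mem hfin,
    fun i k => exists_single_add_nsmul_single_mem hfin⟩, fun ⟨hax, hmix⟩ => ?_⟩
  refine finite_compl_of_forall_exists_nsmul_single_add_mem fun k =>
    exists_forall_nsmul_single_add_mem (fun j => ?_) k fun i hik => ?_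
  · obtain ⟨r, a, -, -, hgcd, haA⟩ := hax j
    exact AddSubmonoid.exists_forall_ge_nsmul_mem _ _
      (Nat.dvd_one.mp (hgcd ▸ Nat.setGcd_range_dvd_gcd a))
      (Set.forall_mem_range.mpr fun t => AddSubmonoid.subset_closure (haA t))
  · obtain ⟨n, hn⟩ := hmix i k hik
    exact ⟨n, AddSubmonoid.subset_closure hn⟩

theorem stmt15 {d : ℕ} (hd : 2 ≤ d) (A : Set (Fin d → ℕ)) :
    ((AddSubmonoid.closure A : Set (Fin d → ℕ))ᶜ).Finite ↔
      (∀ j : Fin d, ∃ (r : ℕ) (a : Fin r → ℕ), 0 < r ∧ (∀ t, 0 < a t) ∧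
          Finset.univ.gcd a = 1 ∧ ∀ t, (a t) • Pi.single j (1 : ℕ) ∈ A) ∧
      (∀ i k : Fin d, i ≠ k →
        ∃ n : ℕ, Pi.single i (1 : ℕ) + n • Pi.single k (1 : ℕ) ∈ A) :=
  stmt15_general A
end

section
/- Let S ⊆ ℕ^d be a generalized numerical semigroup satisfying: for each j, the numerical semigroup S_j = {a : a·e_j ∈ S} has Frobenius bound F^(j) = max{F(S_j), 0}, and for each pair i ≠ j there is n_i^(j) ∈ ℕ with e_i + n_i^(j)·e_j ∈ S. Define v ∈ ℕ^d by v^(j) = Σ_{i ≠ j} F^(i)·n_i^(j) + F^(j). Then every gap of S is componentwise ≤ v, i.e., H(S) ⊆ B(v) = {x ∈ ℕ^d : x ≤ v}. -/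
/-!
If `x ∉ S` had `x j > v j` for some `j`, write `x` as a sum of elements of `S`: for each `i ≠ j`,
take `x i • e_i` when `x i > F i`, and otherwise `x i • (e_i + n i j • e_j)`, which spends at most
`F i * n i j` of coordinate `j`. What is left of coordinate `j` still exceeds `F j`, so it is a
multiple of `e_j` lying in `S`, and `x ∈ S` after all.
-/

open Finset

section

variable {ι : Type*} [DecidableEq ι]

theorem nsmul_single_one (i : ι) (a : ℕ) : a • Pi.single i (1 : ℕ) = (Pi.single i a : ι → ℕ) := by
  rw [← Pi.single_smul, smul_eq_mul, mul_one]

theorem pi_single_finset_sum (s : Finset ι) (j : ι) (f : ι → ℕ) :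
    (Pi.single j (∑ i ∈ s, f i) : ι → ℕ) = ∑ i ∈ s, Pi.single j (f i) :=
  map_sum (AddMonoidHom.single (fun _ => ℕ) j) f s

variable (M : AddSubmonoid (ι → ℕ))

theorem single_add_single_mul_mem {i j : ι} {k : ℕ}
    (h : Pi.single i 1 + Pi.single j k ∈ M) (a : ℕ) :
    Pi.single i a + Pi.single j (a * k) ∈ M := by
  convert M.nsmul_mem h a using 1
  rw [smul_add, nsmul_single_one, ← Pi.single_smul, smul_eq_mul]

theorem mem_of_sum_mul_add_lt [Fintype ι] (F : ι → ℕ) (n : ι → ι → ℕ)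
    (hF : ∀ i a, F i < a → Pi.single i a ∈ M)
    (hn : ∀ i j, i ≠ j → Pi.single i 1 + Pi.single j (n i j) ∈ M)
    {x : ι → ℕ} {j : ι} (hx : ∑ i ∈ univ.erase j, F i * n i j + F j < x j) : x ∈ M := by
  set m : ι → ℕ := fun i => if F i < x i then 0 else x i * n i j
  have hm : ∑ i ∈ univ.erase j, m i ≤ ∑ i ∈ univ.erase j, F i * n i j := by
    refine sum_le_sum fun i _ => ?_
    dsimp only [m]
    split_ifs with h
    · exact Nat.zero_le _
    · exact Nat.mul_le_mul_right _ (not_lt.mp h)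
  have hc : ∀ i ∈ univ.erase j, Pi.single i (x i) + Pi.single j (m i) ∈ M := by
    intro i hi
    dsimp only [m]
    split_ifs with h
    · simpa using hF i (x i) h
    · exact single_add_single_mul_mem M (hn i j (ne_of_mem_erase hi)) (x i)
  have hx_eq : x = ∑ i ∈ univ.erase j, (Pi.single i (x i) + Pi.single j (m i)) +
      Pi.single j (x j - ∑ i ∈ univ.erase j, m i) := by
    rw [sum_add_distrib, ← pi_single_finset_sum, add_assoc, ← Pi.single_add,
      Nat.add_sub_cancel' (by omega), add_comm,
      add_sum_erase univ (fun i => Pi.single i (x i)) (mem_univ j), univ_sum_single]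
  rw [hx_eq]
  exact add_mem (M.sum_mem hc) (hF j _ (by omega))

end

theorem stmt16_general {d : ℕ} (S : Set (Fin d → ℕ))
    (h0 : (0 : Fin d → ℕ) ∈ S) (hadd : ∀ a ∈ S, ∀ b ∈ S, a + b ∈ S)
    (F : Fin d → ℕ)
    (hF : ∀ j : Fin d, (∀ a : ℕ, F j < a → a • Pi.single j (1 : ℕ) ∈ S) ∧
      (F j = 0 ∨ (F j) • Pi.single j (1 : ℕ) ∉ S))
    (n : Fin d → Fin d → ℕ)
    (hn : ∀ i j : Fin d, i ≠ j →
      Pi.single i (1 : ℕ) + (n i j) • Pi.single j (1 : ℕ) ∈ S)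
    (v : Fin d → ℕ)
    (hv : ∀ j : Fin d, v j = (∑ i ∈ Finset.univ.erase j, F i * n i j) + F j) :
    ∀ x : Fin d → ℕ, x ∉ S → x ≤ v := by
  let M : AddSubmonoid (Fin d → ℕ) :=
    { carrier := S, add_mem' := fun ha hb => hadd _ ha _ hb, zero_mem' := h0 }
  intro x hx
  by_contra hxv
  simp only [Pi.le_def, not_forall, not_le] at hxv
  obtain ⟨j, hj⟩ := hxv
  refine hx (mem_of_sum_mul_add_lt M F n (fun i a ha => ?_) (fun i j hij => ?_) (hv j ▸ hj))
  · rw [← nsmul_single_one]; exact (hF i).1 a ha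
  · rw [← nsmul_single_one j]; exact hn i j hij

theorem stmt16 {d : ℕ} (S : Set (Fin d → ℕ))
    (h0 : (0 : Fin d → ℕ) ∈ S) (hadd : ∀ a ∈ S, ∀ b ∈ S, a + b ∈ S)
    (hfin : Sᶜ.Finite)
    (F : Fin d → ℕ)
    (hF : ∀ j : Fin d, (∀ a : ℕ, F j < a → a • Pi.single j (1 : ℕ) ∈ S) ∧
      (F j = 0 ∨ (F j) • Pi.single j (1 : ℕ) ∉ S))
    (n : Fin d → Fin d → ℕ)
    (hn : ∀ i j : Fin d, i ≠ j →
      Pi.single i (1 : ℕ) + (n i j) • Pi.single j (1 : ℕ) ∈ S)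
    (v : Fin d → ℕ)
    (hv : ∀ j : Fin d, v j = (∑ i ∈ Finset.univ.erase j, F i * n i j) + F j) :
    ∀ x : Fin d → ℕ, x ∉ S → x ≤ v :=
  stmt16_general S h0 hadd F hF n hn v hv
end

section
/- Let ⪯ be a relaxed monomial order on ℕ^d and let T ⊆ ℕ^d be a generalized numerical semigroup. Suppose h is a special gap of T with h ≺ m_⪯(T), and x is a minimal generator of T ∪ {h} with x ≠ h and F_⪯(T ∪ {h}) ≺ x. Then S = (T ∪ {h}) \ {x} is a generalized numerical semigroup with m_⪯(S) = h and F_⪯(S) = x; consequently (S ∪ {F_⪯(S)}) \ {m_⪯(S)} = T. -/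
theorem stmt17 {d : ℕ} (r : (Fin d → ℕ) → (Fin d → ℕ) → Prop)
    (hr : RelaxedMonomialOrder r) (T : Set (Fin d → ℕ))
    (h0 : (0 : Fin d → ℕ) ∈ T) (hadd : ∀ a ∈ T, ∀ b ∈ T, a + b ∈ T)
    (hfin : Tᶜ.Finite)
    (h : Fin d → ℕ) (hh : h ∉ T)
    (hsg : 2 • h ∈ T ∧ ∀ t ∈ T, t ≠ 0 → h + t ∈ T)
    (mT : Fin d → ℕ) (hmT : mT ∈ T) (hmT0 : mT ≠ 0)
    (hmTmin : ∀ y ∈ T, y ≠ 0 → r mT y)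
    (hhm : r h mT ∧ h ≠ mT)
    (x : Fin d → ℕ) (hx : x ∈ T ∪ {h}) (hx0 : x ≠ 0)
    (hxmin : ¬ ∃ a b : Fin d → ℕ, a ∈ T ∪ {h} ∧ a ≠ 0 ∧ b ∈ T ∪ {h} ∧ b ≠ 0 ∧
      x = a + b)
    (hxh : x ≠ h)
    (F' : Fin d → ℕ) (hF' : F' ∉ T ∪ {h}) (hF'max : ∀ y, y ∉ T ∪ {h} → r y F')
    (hFx : r F' x ∧ F' ≠ x)
    (S : Set (Fin d → ℕ)) (hS : S = (T ∪ {h}) \ {x}) :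
    ((0 : Fin d → ℕ) ∈ S ∧ (∀ a ∈ S, ∀ b ∈ S, a + b ∈ S) ∧ (Sᶜ).Finite) ∧
    (h ∈ S ∧ h ≠ 0 ∧ ∀ y ∈ S, y ≠ 0 → r h y) ∧
    (x ∉ S ∧ ∀ y, y ∉ S → r y x) ∧
    (S ∪ {x}) \ {h} = T := by

  obtain ⟨rtot, ranti, rtrans, radd, rzero⟩ := hr
  have rrefl : ∀ v, r v v := fun v => (rtot v v).elim id id
  have hxT : x ∈ T := hx.resolve_right (fun e => hxh e)
  have hh0 : h ≠ 0 := fun e => hh (e ▸ h0)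
  subst hS
  have hmemS : ∀ y, y ∈ T ∪ {h} → y ≠ x → y ∈ (T ∪ {h}) \ {x} :=
    fun y hy hyx => ⟨hy, hyx⟩
  refine ⟨⟨hmemS 0 (Or.inl h0) (fun e => hx0 e.symm), ?_, ?_⟩,
    ⟨hmemS h (Or.inr rfl) (fun e => hxh e.symm), hh0, ?_⟩, ⟨fun hxS => hxS.2 rfl, ?_⟩, ?_⟩
  · rintro a ⟨ha, hax⟩ b ⟨hb, hbx⟩
    by_cases ha0 : a = 0
    · rw [ha0, zero_add]; exact ⟨hb, hbx⟩
    by_cases hb0 : b = 0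
    · rw [hb0, add_zero]; exact ⟨ha, hax⟩
    refine hmemS _ ?_ (fun e => hxmin ⟨a, b, ha, ha0, hb, hb0, e.symm⟩)
    rcases ha with haT | hah <;> rcases hb with hbT | hbh
    · exact Or.inl (hadd a haT b hbT)
    · rw [Set.mem_singleton_iff] at hbh
      rw [hbh, add_comm]; exact Or.inl (hsg.2 a haT ha0)
    · rw [Set.mem_singleton_iff] at hah
      rw [hah]; exact Or.inl (hsg.2 b hbT hb0)
    · rw [Set.mem_singleton_iff] at hah hbh
      rw [hah, hbh, ← two_nsmul h]; exact Or.inl hsg.1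
  · refine (hfin.union (Set.finite_singleton x)).subset (fun y hy => ?_)
    by_cases hyx : y = x
    · exact Or.inr hyx
    · exact Or.inl (fun hyT => hy ⟨Or.inl hyT, hyx⟩)
  · rintro y ⟨hy, hyx⟩ hy0
    rcases hy with hyT | hyh
    · exact rtrans h mT y hhm.1 (hmTmin y hyT hy0)
    · rw [Set.mem_singleton_iff] at hyh; rw [hyh]; exact rrefl h
  · intro y hyS
    by_cases hyx : y = x
    · subst hyx; exact rrefl y
    · have : y ∉ T ∪ {h} := fun hy => hyS ⟨hy, hyx⟩
      exact rtrans y F' x (hF'max y this) hFx.1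
  · ext y
    simp only [Set.mem_diff, Set.mem_union, Set.mem_singleton_iff]
    constructor
    · rintro ⟨⟨yT | yh, _⟩ | rfl, yneh⟩
      · exact yT
      · exact absurd yh yneh
      · exact hxT
    · intro yT
      refine ⟨?_, fun e => hh (e ▸ yT)⟩
      by_cases yx : y = x
      · exact Or.inr yx
      · exact Or.inl ⟨Or.inl yT, yx⟩
end
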